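/- arXiv:2309.13634 — 2 statements merged into one kernel-verified Lean document; each statement's English description precedes it below -/
import Mathlib

section
/- If 𝒞 is not a k-weak hierarchy, then there exists a set A ⊆ X with |A| = k+1 such that for every subset U ⊊ A with |U| ≤ k we have cl(U) ≠ cl(A). -/
/-- Closure function of a set system: intersection of all members containing `A`
(empty intersection yields the full set). -/
def SetSys.cl {X : Type*} (𝒞 : Set (Set X)) (A : Set X) : Set X :=
  ⋂₀ {C | C ∈ 𝒞 ∧ A ⊆ C}

/-- `𝒞` is a `k`-weak hierarchy: for any `k+1` members, one of them can be dropped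
without changing the total intersection. -/
def SetSys.kWeak {X : Type*} (𝒞 : Set (Set X)) (k : ℕ) : Prop :=
  ∀ A : Fin (k + 1) → Set X, (∀ i, A i ∈ 𝒞) →
    ∃ j, (⋂ i, A i) = ⋂ i ∈ Finset.univ.erase j, A i

/-!
If `B₀, …, B_k ∈ 𝒞` witness the failure of the `k`-weak hierarchy property, each `B_j` misses a
point `x_j` lying in all the other `B_i`. The `x_j` are distinct, and any `U ⊊ {x₀, …, x_k}`
misses some `x_j`, so `U ⊆ B_j`; hence `cl U ⊆ B_j`, while `x_j ∈ cl {x₀, …, x_k}`.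
-/

namespace SetSys

variable {X : Type*} {𝒞 : Set (Set X)}

theorem subset_cl (A : Set X) : A ⊆ cl 𝒞 A :=
  fun _ ha _ hC => hC.2 ha

theorem cl_subset {A C : Set X} (hC : C ∈ 𝒞) (hAC : A ⊆ C) : cl 𝒞 A ⊆ C :=
  Set.sInter_subset_of_mem ⟨hC, hAC⟩

theorem exists_notMem_of_iInter_ne {ι : Type*} {B : ι → Set X} {j : ι}
    (h : (⋂ i, B i) ≠ ⋂ (i) (_ : i ≠ j), B i) : ∃ x, x ∉ B j ∧ ∀ i ≠ j, x ∈ B i := by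
  by_contra! hB
  refine h (Set.Subset.antisymm (fun x hx => Set.mem_iInter₂.2 fun i _ => Set.mem_iInter.1 hx i)
    fun x hx => Set.mem_iInter.2 fun i => ?_)
  rw [Set.mem_iInter₂] at hx
  obtain rfl | hij := eq_or_ne i j
  · by_contra hxi
    obtain ⟨l, hlj, hxl⟩ := hB x hxi
    exact hxl (hx l hlj)
  · exact hx i hij

theorem exists_mem_iff_ne_of_not_kWeak {k : ℕ} (h : ¬ kWeak 𝒞 k) :
    ∃ B : Fin (k + 1) → Set X, (∀ i, B i ∈ 𝒞) ∧
      ∃ x : Fin (k + 1) → X, ∀ i j, x i ∈ B j ↔ i ≠ j := by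
  simp only [kWeak, not_forall, not_exists] at h
  obtain ⟨B, hB, hne⟩ := h
  have hwit : ∀ j, ∃ x, x ∉ B j ∧ ∀ i ≠ j, x ∈ B i := fun j =>
    exists_notMem_of_iInter_ne (by simpa using hne j)
  choose x hxj hxi using hwit
  exact ⟨B, hB, x, fun i j => ⟨fun hx hij => hxj j (hij ▸ hx), fun hij => hxi i j hij.symm⟩⟩

variable {ι : Type*} {B : ι → Set X} {x : ι → X}

theorem injective_of_mem_iff_ne (hx : ∀ i j, x i ∈ B j ↔ i ≠ j) : Function.Injective x :=
  fun i j hij => by_contra fun hne => (hx j j).1 (hij ▸ (hx i j).2 hne) rfl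

theorem cl_ne_cl_range_of_ssubset (hB : ∀ i, B i ∈ 𝒞) (hx : ∀ i j, x i ∈ B j ↔ i ≠ j)
    {U : Set X} (hU : U ⊂ Set.range x) : cl 𝒞 U ≠ cl 𝒞 (Set.range x) := by
  obtain ⟨_, ⟨j, rfl⟩, hjU⟩ := Set.exists_of_ssubset hU
  have hUB : U ⊆ B j := by
    intro u hu
    obtain ⟨i, rfl⟩ := hU.subset hu
    exact (hx i j).2 fun hij => hjU (hij ▸ hu)
  intro hcl
  exact (hx j j).1 (cl_subset (hB j) hUB (hcl ▸ subset_cl _ ⟨j, rfl⟩)) rfl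

end SetSys

theorem stmt2_general {X : Type*} (𝒞 : Set (Set X)) (k : ℕ)
    (hwk : ¬ SetSys.kWeak 𝒞 k) :
    ∃ A : Set X, A.ncard = k + 1 ∧
      ∀ U : Set X, U ⊂ A → U.ncard ≤ k → SetSys.cl 𝒞 U ≠ SetSys.cl 𝒞 A := by
  obtain ⟨B, hB, x, hx⟩ := SetSys.exists_mem_iff_ne_of_not_kWeak hwk
  refine ⟨Set.range x, ?_, fun U hU _ => SetSys.cl_ne_cl_range_of_ssubset hB hx hU⟩
  rw [Set.ncard_range_of_injective (SetSys.injective_of_mem_iff_ne hx), Nat.card_fin]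

/-- If `𝒞` is not a `k`-weak hierarchy, there is `A` with `|A| = k+1` such that no proper
subset `U ⊊ A` with `|U| ≤ k` satisfies `cl(U) = cl(A)`. -/
theorem stmt2 {X : Type*} [Fintype X] (𝒞 : Set (Set X)) (k : ℕ)
    (hwk : ¬ SetSys.kWeak 𝒞 k) :
    ∃ A : Set X, A.ncard = k + 1 ∧
      ∀ U : Set X, U ⊂ A → U.ncard ≤ k → SetSys.cl 𝒞 U ≠ SetSys.cl 𝒞 A :=
  stmt2_general 𝒞 k hwk
end

section
/- Let G be a DAG with leaf set X, A ⊆ X nonempty, and suppose lca(A) is defined. Then 𝒞(lca(A)) is the unique inclusion-minimal cluster in 𝒞_G containing A; that is, for every v ∈ V(G) with A ⊆ 𝒞(v) we have 𝒞(lca(A)) ⊆ 𝒞(v). -/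
namespace Dag

variable {V : Type*}

/-- Reachability order of a digraph: `v ⪯ w` iff there is a directed path from `w` to `v`. -/
def reach (adj : V → V → Prop) (v w : V) : Prop :=
  Relation.ReflTransGen (fun a b => adj b a) v w

/-- The digraph is acyclic: its reachability relation is antisymmetric. -/
def acyclic (adj : V → V → Prop) : Prop :=
  ∀ v w, reach adj v w → reach adj w v → v = w

/-- A leaf is a `⪯`-minimal vertex. -/
def leaf (adj : V → V → Prop) (x : V) : Prop :=
  ∀ v, reach adj v x → v = x

/-- The set of leaves of the digraph. -/
def leaves (adj : V → V → Prop) : Set V := {x | leaf adj x}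

/-- The cluster of `v`: all leaves that are descendants of `v`. -/
def cluster (adj : V → V → Prop) (v : V) : Set V :=
  {x | leaf adj x ∧ reach adj x v}

/-- The clustering system of the digraph. -/
def clusters (adj : V → V → Prop) : Set (Set V) := {C | ∃ v, C = cluster adj v}

/-- `w` is a least common ancestor of `A`: a `⪯`-minimal common ancestor of `A`. -/
def isLCA (adj : V → V → Prop) (A : Set V) (w : V) : Prop :=
  (∀ a ∈ A, reach adj a w) ∧ ∀ u, (∀ a ∈ A, reach adj a u) → reach adj u w → u = w

/-- `A` has a unique least common ancestor. -/
def hasUniqueLCA (adj : V → V → Prop) (A : Set V) : Prop := ∃! w, isLCA adj A w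

end Dag

/-!
Below any common ancestor `v` of `A` there is a reach-minimal common ancestor, by finiteness;
by acyclicity it is an LCA of `A`, hence equal to `w`, and clusters grow along `⪯`.
-/

namespace Dag

variable {V : Type*} {adj : V → V → Prop}

theorem cluster_subset_cluster_of_reach {u v : V} (h : reach adj u v) :
    cluster adj u ⊆ cluster adj v :=
  fun _ hx => ⟨hx.1, hx.2.trans h⟩

theorem subset_cluster_of_forall_reach {A : Set V} (hAX : A ⊆ leaves adj) {v : V}
    (h : ∀ a ∈ A, reach adj a v) : A ⊆ cluster adj v :=
  fun a ha => ⟨hAX ha, h a ha⟩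

/-- Minimal up to cycles: without acyclicity, `reach` is only a preorder. -/
theorem exists_minimal_reach [Finite V] {S : Set V} (hS : S.Nonempty) :
    ∃ u ∈ S, ∀ u' ∈ S, reach adj u' u → reach adj u u' := by
  let lt : V → V → Prop := fun a b => reach adj a b ∧ ¬ reach adj b a
  have : IsTrans V lt := ⟨fun _ _ _ hab hbc => ⟨hab.1.trans hbc.1, fun h => hab.2 (hbc.1.trans h)⟩⟩
  have : Std.Irrefl lt := ⟨fun _ h => h.2 .refl⟩
  obtain ⟨u, huS, hmin⟩ := (Finite.wellFounded_of_trans_of_irrefl lt).has_min S hS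
  exact ⟨u, huS, fun u' hu' hu'u => not_not.mp fun h => hmin u' hu' ⟨hu'u, h⟩⟩

theorem exists_isLCA_reach [Finite V] (hacy : acyclic adj) {A : Set V} {v : V}
    (hv : ∀ a ∈ A, reach adj a v) : ∃ u, isLCA adj A u ∧ reach adj u v := by
  obtain ⟨u, ⟨huA, huv⟩, hmin⟩ :=
    exists_minimal_reach (adj := adj) (S := {u | (∀ a ∈ A, reach adj a u) ∧ reach adj u v})
      ⟨v, hv, .refl⟩
  refine ⟨u, ⟨huA, fun u' hu'A hu'u => hacy u' u hu'u ?_⟩, huv⟩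
  exact hmin u' ⟨hu'A, hu'u.trans huv⟩ hu'u

end Dag

theorem stmt6_general {V : Type*} [Fintype V] (adj : V → V → Prop) (hacy : Dag.acyclic adj)
    (A : Set V) (hAX : A ⊆ Dag.leaves adj)
    (w : V) (hw : Dag.isLCA adj A w) (huniq : ∀ w' : V, Dag.isLCA adj A w' → w' = w) :
    A ⊆ Dag.cluster adj w ∧
      ∀ v : V, A ⊆ Dag.cluster adj v → Dag.cluster adj w ⊆ Dag.cluster adj v := by
  refine ⟨Dag.subset_cluster_of_forall_reach hAX hw.1, fun v hv => ?_⟩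
  obtain ⟨u, hu, huv⟩ := Dag.exists_isLCA_reach hacy fun a ha => (hv ha).2
  exact huniq u hu ▸ Dag.cluster_subset_cluster_of_reach huv

/-- If `A ⊆ X` is nonempty and has a unique LCA `w`, then `𝒞(w)` is the unique
inclusion-minimal cluster containing `A`. -/
theorem stmt6 {V : Type*} [Fintype V] (adj : V → V → Prop) (hacy : Dag.acyclic adj)
    (A : Set V) (hAX : A ⊆ Dag.leaves adj) (hne : A.Nonempty)
    (w : V) (hw : Dag.isLCA adj A w) (huniq : ∀ w' : V, Dag.isLCA adj A w' → w' = w) :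
    A ⊆ Dag.cluster adj w ∧
      ∀ v : V, A ⊆ Dag.cluster adj v → Dag.cluster adj w ⊆ Dag.cluster adj v :=
  stmt6_general adj hacy A hAX w hw huniq
end
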